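/- Let H be a complex Hilbert space and let A, B be bounded linear operators on H. Let T be the bounded operator on H × H given by T(u, v) = (A u − B v, 0), and let P be the orthogonal projection of H × H onto the kernel of T. Define bounded operators on H by X u := (P(u, 0)).1, Z u := (P(u, 0)).2, Y v := (P(0, v)).2, and note that the remaining block of P is Z*, i.e., (P(0, v)).1 = Z* v. Then X and Y are positive operators, and (range A) ∩ (range B) = range(A ∘ X) + range(A ∘ Z*) = range(B ∘ Z) + range(B ∘ Y), where + denotes the sum of subspaces of H. -/

import Mathlib

/-!
Write the projection `P` onto `ker T = {(u, v) | A u = B v}` as a block operator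
`[[X, Z*], [Z, Y]]` on `H × H`. The diagonal blocks are compressions `ι* P ι` of the positive
operator `P` by the coordinate inclusions, hence positive, and self-adjointness of `P` identifies
the upper right block with `Z*`. Since `P` maps into `ker T`, `A X = B Z` and `A Z* = B Y`; since
`P` fixes `ker T`, every `A u = B v` satisfies `u = X u + Z* v` and `v = Z u + Y v`.
-/

set_option synthInstance.maxHeartbeats 400000
set_option maxHeartbeats 1000000

open ContinuousLinearMap

variable {H : Type*} [NormedAddCommGroup H] [InnerProductSpace ℂ H] [CompleteSpace H]

noncomputable def kerProj (T : WithLp 2 (H × H) →L[ℂ] WithLp 2 (H × H)) :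
    WithLp 2 (H × H) →L[ℂ] WithLp 2 (H × H) :=
  haveI : CompleteSpace (LinearMap.ker (T : WithLp 2 (H × H) →ₗ[ℂ] WithLp 2 (H × H))) := T.isClosed_ker.completeSpace_coe
  (LinearMap.ker (T : WithLp 2 (H × H) →ₗ[ℂ] WithLp 2 (H × H))).subtypeL ∘L
    (LinearMap.ker (T : WithLp 2 (H × H) →ₗ[ℂ] WithLp 2 (H × H))).orthogonalProjectionOnto

open WithLp

section Blocks

variable {𝕜 E F : Type*} [RCLike 𝕜] [NormedAddCommGroup E] [InnerProductSpace 𝕜 E]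
  [NormedAddCommGroup F] [InnerProductSpace 𝕜 F]

namespace WithLp

variable (𝕜 E F) in
noncomputable def inlL : E →L[𝕜] WithLp 2 (E × F) :=
  (prodContinuousLinearEquiv 2 𝕜 E F).symm.toContinuousLinearMap ∘L ContinuousLinearMap.inl 𝕜 E F

variable (𝕜 E F) in
noncomputable def inrL : F →L[𝕜] WithLp 2 (E × F) :=
  (prodContinuousLinearEquiv 2 𝕜 E F).symm.toContinuousLinearMap ∘L ContinuousLinearMap.inr 𝕜 E F

@[simp]
lemma inlL_apply (u : E) : inlL 𝕜 E F u = toLp 2 (u, 0) := rfl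

@[simp]
lemma inrL_apply (v : F) : inrL 𝕜 E F v = toLp 2 (0, v) := rfl

lemma apply_toLp_eq_blocks (P : WithLp 2 (E × F) →L[𝕜] WithLp 2 (E × F)) (u : E) (v : F) :
    P (toLp 2 (u, v)) = toLp 2
      ((fstL 2 𝕜 E F ∘L P ∘L inlL 𝕜 E F) u + (fstL 2 𝕜 E F ∘L P ∘L inrL 𝕜 E F) v,
        (sndL 2 𝕜 E F ∘L P ∘L inlL 𝕜 E F) u + (sndL 2 𝕜 E F ∘L P ∘L inrL 𝕜 E F) v) := by
  have : toLp 2 (u, v) = inlL 𝕜 E F u + inrL 𝕜 E F v := by simp [← WithLp.toLp_add]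
  rw [this, map_add]
  rfl

variable [CompleteSpace E] [CompleteSpace F]

lemma adjoint_inlL : adjoint (inlL 𝕜 E F) = fstL 2 𝕜 E F :=
  ((eq_adjoint_iff _ _).mpr fun x u => by simp [prod_inner_apply]).symm

lemma adjoint_inrL : adjoint (inrL 𝕜 E F) = sndL 2 𝕜 E F :=
  ((eq_adjoint_iff _ _).mpr fun x v => by simp [prod_inner_apply]).symm

end WithLp

variable [CompleteSpace E] [CompleteSpace F] {P : WithLp 2 (E × F) →L[𝕜] WithLp 2 (E × F)}

lemma ContinuousLinearMap.IsPositive.fstL_comp_comp_inlL (hP : P.IsPositive) :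
    (fstL 2 𝕜 E F ∘L P ∘L inlL 𝕜 E F).IsPositive := by
  simpa [adjoint_inlL] using hP.adjoint_conj (inlL 𝕜 E F)

lemma ContinuousLinearMap.IsPositive.sndL_comp_comp_inrL (hP : P.IsPositive) :
    (sndL 2 𝕜 E F ∘L P ∘L inrL 𝕜 E F).IsPositive := by
  simpa [adjoint_inrL] using hP.adjoint_conj (inrL 𝕜 E F)

lemma IsSelfAdjoint.adjoint_sndL_comp_comp_inlL (hP : IsSelfAdjoint P) :
    adjoint (sndL 2 𝕜 E F ∘L P ∘L inlL 𝕜 E F) = fstL 2 𝕜 E F ∘L P ∘L inrL 𝕜 E F := by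
  rw [adjoint_comp, adjoint_comp, hP.adjoint_eq, ← adjoint_inlL, ← adjoint_inrL, adjoint_adjoint,
    comp_assoc]

end Blocks

lemma LinearMap.range_inf_range_eq_sup {R M N W : Type*} [Semiring R] [AddCommMonoid M]
    [AddCommMonoid N] [AddCommMonoid W] [Module R M] [Module R N] [Module R W]
    (A : M →ₗ[R] W) (B : N →ₗ[R] W) (X : M →ₗ[R] M) (X' : N →ₗ[R] M)
    (hfix : ∀ u v, A u = B v → X u + X' v = u)
    (hX : ∀ u, A (X u) ∈ range B) (hX' : ∀ v, A (X' v) ∈ range B) :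
    range A ⊓ range B = range (A ∘ₗ X) ⊔ range (A ∘ₗ X') := by
  refine le_antisymm ?_ (sup_le ?_ ?_)
  · rintro w ⟨⟨u, rfl⟩, v, hv⟩
    rw [← hfix u v hv.symm, map_add]
    exact Submodule.add_mem_sup ⟨u, rfl⟩ ⟨v, rfl⟩
  · rintro w ⟨u, rfl⟩
    exact ⟨⟨X u, rfl⟩, hX u⟩
  · rintro w ⟨v, rfl⟩
    exact ⟨⟨X' v, rfl⟩, hX' v⟩

section kerProj

variable (T : WithLp 2 (H × H) →L[ℂ] WithLp 2 (H × H))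

instance : (LinearMap.ker (T : WithLp 2 (H × H) →ₗ[ℂ] WithLp 2 (H × H))).HasOrthogonalProjection :=
  have := T.isClosed_ker.completeSpace_coe
  inferInstance

lemma kerProj_eq_starProjection :
    kerProj T = (LinearMap.ker (T : WithLp 2 (H × H) →ₗ[ℂ] WithLp 2 (H × H))).starProjection :=
  rfl

lemma isStarProjection_kerProj : IsStarProjection (kerProj T) :=
  kerProj_eq_starProjection T ▸ isStarProjection_starProjection

lemma apply_kerProj_eq_zero (x) : T (kerProj T x) = 0 :=
  (kerProj_eq_starProjection T ▸ Submodule.starProjection_apply_mem _ x :)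

lemma kerProj_apply_eq_self {x} (hx : T x = 0) : kerProj T x = x :=
  kerProj_eq_starProjection T ▸ Submodule.starProjection_eq_self_iff.mpr hx

end kerProj

/-- Lemma 3.9 (range identities): with `T(u,v) = (Au - Bv, 0)` on `H × H`, `P` the
orthogonal projection onto `ker T`, and `X u = (P(u,0)).1`, `Z u = (P(u,0)).2`,
`Y v = (P(0,v)).2`, the operators `X, Y` are positive, the remaining block of `P` is
`Z*`, and `range A ∩ range B = range (A X) + range (A Z*) = range (B Z) + range (B Y)`. -/
theorem stmt12 (A B : H →L[ℂ] H)
    (T : WithLp 2 (H × H) →L[ℂ] WithLp 2 (H × H))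
    (hT : ∀ u v : H, T ((WithLp.equiv 2 (H × H)).symm (u, v)) =
      (WithLp.equiv 2 (H × H)).symm (A u - B v, 0))
    (X Y Z : H →L[ℂ] H)
    (hX : ∀ u : H,
      X u = (WithLp.equiv 2 (H × H) (kerProj T ((WithLp.equiv 2 (H × H)).symm (u, 0)))).1)
    (hZ : ∀ u : H,
      Z u = (WithLp.equiv 2 (H × H) (kerProj T ((WithLp.equiv 2 (H × H)).symm (u, 0)))).2)
    (hY : ∀ v : H,
      Y v = (WithLp.equiv 2 (H × H) (kerProj T ((WithLp.equiv 2 (H × H)).symm (0, v)))).2) :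
    X.IsPositive ∧ Y.IsPositive ∧
    (∀ v : H,
      (WithLp.equiv 2 (H × H) (kerProj T ((WithLp.equiv 2 (H × H)).symm (0, v)))).1 =
        adjoint Z v) ∧
    LinearMap.range (A : H →ₗ[ℂ] H) ⊓ LinearMap.range (B : H →ₗ[ℂ] H) =
      LinearMap.range (A ∘L X : H →ₗ[ℂ] H) ⊔ LinearMap.range (A ∘L adjoint Z : H →ₗ[ℂ] H) ∧
    LinearMap.range (A : H →ₗ[ℂ] H) ⊓ LinearMap.range (B : H →ₗ[ℂ] H) =
      LinearMap.range (B ∘L Z : H →ₗ[ℂ] H) ⊔ LinearMap.range (B ∘L Y : H →ₗ[ℂ] H) := by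
  simp only [WithLp.equiv_symm_apply, WithLp.equiv_apply] at hT hX hY hZ ⊢
  set P := kerProj T
  have hP : IsStarProjection P := isStarProjection_kerProj T
  have hXP : X = fstL 2 ℂ H H ∘L P ∘L inlL ℂ H H := by ext u; simp [hX]
  have hZP : Z = sndL 2 ℂ H H ∘L P ∘L inlL ℂ H H := by ext u; simp [hZ]
  have hYP : Y = sndL 2 ℂ H H ∘L P ∘L inrL ℂ H H := by ext v; simp [hY]
  have hZadj : adjoint Z = fstL 2 ℂ H H ∘L P ∘L inrL ℂ H H :=
    hZP ▸ hP.isSelfAdjoint.adjoint_sndL_comp_comp_inlL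
  have hP_apply (u v : H) : P (toLp 2 (u, v)) = toLp 2 (X u + adjoint Z v, Z u + Y v) := by
    rw [hXP, hYP, hZadj, hZP]; exact apply_toLp_eq_blocks P u v
  have hker (u v : H) : T (toLp 2 (u, v)) = 0 ↔ A u = B v := by
    rw [hT, ← WithLp.toLp_zero, (WithLp.toLp_injective 2).eq_iff]
    simp [Prod.ext_iff, sub_eq_zero]
  have hP_ker (u v : H) : A (X u + adjoint Z v) = B (Z u + Y v) :=
    (hker _ _).mp (hP_apply u v ▸ apply_kerProj_eq_zero T _)
  have hfix (u v : H) (h : A u = B v) : X u + adjoint Z v = u ∧ Z u + Y v = v := by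
    have := kerProj_apply_eq_self T ((hker u v).mpr h)
    rwa [hP_apply, (WithLp.toLp_injective 2).eq_iff, Prod.ext_iff] at this
  have hP_pos : P.IsPositive := .of_isStarProjection hP
  refine ⟨hXP ▸ hP_pos.fstL_comp_comp_inlL, hYP ▸ hP_pos.sndL_comp_comp_inrL,
    fun v => by simp [hZadj], ?_, ?_⟩
  · exact LinearMap.range_inf_range_eq_sup _ _ _ _ (fun u v h => (hfix u v h).1)
      (fun u => ⟨Z u, by simpa using (hP_ker u 0).symm⟩)
      (fun v => ⟨Y v, by simpa using (hP_ker 0 v).symm⟩)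
  · rw [inf_comm, sup_comm]
    exact LinearMap.range_inf_range_eq_sup _ _ _ _
      (fun v u h => (add_comm _ _).trans (hfix u v h.symm).2)
      (fun v => ⟨adjoint Z v, by simpa using hP_ker 0 v⟩)
      (fun u => ⟨X u, by simpa using hP_ker u 0⟩)
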